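/- Fix N ≥ 2, α < 0, μ > 0, and define for ω > α²/N² the squared L² mass of the ground state M(ω) = N·((μ+1)^{1/μ}/μ)·ω^{1/μ − 1/2} ∫_{|α|/(N√ω)}^1 (1−t²)^{1/μ−1} dt. Then dM/dω = C[(1/μ − 1/2)∫_{|α|/(N√ω)}^1 (1−t²)^{1/μ−1} dt + (|α|/(2N√ω))(1 − α²/(N²ω))^{1/μ−1}] with C = N((μ+1)^{1/μ}/μ) ω^{1/μ − 3/2}, and this derivative is strictly positive for all ω > α²/N² whenever 0 < μ ≤ 2. -/

import Mathlib

/-!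
Write `M(ω) = K ω^q F(a(ω))` with `q = 1/μ - 1/2`, `F(u) = ∫_u^1 (1-t²)^p dt`, `p = 1/μ - 1 > -1`
and `a(ω) = |α|/(N√ω) ∈ (0, 1)`. The integrand is integrable on `[a, 1]` and continuous at `a`, so
`F'(a) = -(1-a²)^p`; with `a'(ω) = -a/(2ω)` the product and chain rules give the derivative.
For `μ ≤ 2` we have `q ≥ 0`, so the integral term is nonnegative while the boundary term is
strictly positive.
-/

noncomputable section

/-- Squared `L²` mass of the ground state on the star graph with `N` edges:
`M(ω) = N ((μ+1)^{1/μ}/μ) ω^{1/μ-1/2} ∫_{|α|/(N√ω)}^1 (1-t²)^{1/μ-1} dt`. -/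
def groundStateMass (N : ℕ) (μ α : ℝ) (ω : ℝ) : ℝ :=
  (N : ℝ) * ((μ + 1) ^ (1 / μ) / μ) * ω ^ (1 / μ - 1 / 2) *
    ∫ t in (|α| / ((N : ℝ) * Real.sqrt ω))..1, (1 - t ^ 2) ^ (1 / μ - 1)

open Real Set MeasureTheory intervalIntegral

section OneSubSqRpow

variable {p a : ℝ}

theorem continuousOn_one_sub_sq_rpow :
    ContinuousOn (fun t : ℝ => (1 - t ^ 2) ^ p) (Ioo (-1) 1) := by
  intro t ⟨ht, ht1⟩
  have hpos : 0 < 1 - t ^ 2 := by nlinarith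
  have hbase : ContinuousAt (fun t : ℝ => 1 - t ^ 2) t := by fun_prop
  exact (hbase.rpow_const (Or.inl hpos.ne')).continuousWithinAt

-- `(1-t²)^p = (1-t)^p (1+t)^p`: an integrable singularity at `1` times a continuous factor.
theorem intervalIntegrable_one_sub_sq_rpow (hp : -1 < p) (ha : -1 < a) (ha1 : a ≤ 1) :
    IntervalIntegrable (fun t : ℝ => (1 - t ^ 2) ^ p) volume a 1 := by
  have hsing : IntervalIntegrable (fun t : ℝ => (1 - t) ^ p) volume a 1 := by
    simpa using (intervalIntegrable_rpow' hp (a := 1 - a) (b := 0)).comp_sub_left 1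
  have hcont : ContinuousOn (fun t : ℝ => (1 + t) ^ p) (uIcc a 1) := by
    rw [uIcc_of_le ha1]
    intro t ⟨ht, _⟩
    have hbase : ContinuousAt (fun t : ℝ => 1 + t) t := by fun_prop
    exact (hbase.rpow_const (Or.inl (by linarith))).continuousWithinAt
  refine (hsing.mul_continuousOn hcont).congr fun t ht => ?_
  rw [uIoc_of_le ha1] at ht
  rw [← mul_rpow (by linarith [ht.2]) (by linarith [ht.1])]
  ring_nf

theorem hasDerivAt_integral_one_sub_sq_rpow (hp : -1 < p) (ha : -1 < a) (ha1 : a < 1) :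
    HasDerivAt (fun u => ∫ t in u..1, (1 - t ^ 2) ^ p) (-(1 - a ^ 2) ^ p) a :=
  integral_hasDerivAt_left (intervalIntegrable_one_sub_sq_rpow hp ha ha1.le)
    (continuousOn_one_sub_sq_rpow.stronglyMeasurableAtFilter isOpen_Ioo a ⟨ha, ha1⟩)
    (continuousOn_one_sub_sq_rpow.continuousAt (Ioo_mem_nhds ha ha1))

theorem integral_one_sub_sq_rpow_nonneg (ha : -1 ≤ a) (ha1 : a ≤ 1) :
    0 ≤ ∫ t in a..1, (1 - t ^ 2) ^ p :=
  integral_nonneg ha1 fun t ht =>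
    rpow_nonneg (by nlinarith [ht.1, ht.2]) p

end OneSubSqRpow

theorem hasDerivAt_div_mul_sqrt (c d : ℝ) {x : ℝ} (hx : 0 < x) :
    HasDerivAt (fun y => c / (d * √y)) (-(c / (d * √x)) / (2 * x)) x := by
  have hs : √x ≠ 0 := (sqrt_pos.mpr hx).ne'
  have hfun : (fun y => c / (d * √y)) = fun y => c / d * (√y)⁻¹ := by
    ext y
    ring
  rw [hfun]
  refine (((hasDerivAt_sqrt hx.ne').inv hs).const_mul (c / d)).congr_deriv ?_
  rw [sq_sqrt hx.le]
  field_simp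

theorem hasDerivAt_rpow_mul_comp_div_mul_sqrt {F : ℝ → ℝ} {F' q c d x : ℝ} (hx : 0 < x)
    (hF : HasDerivAt F F' (c / (d * √x))) :
    HasDerivAt (fun y => y ^ q * F (c / (d * √y)))
      (x ^ (q - 1) * (q * F (c / (d * √x)) - c / (2 * d * √x) * F')) x := by
  refine ((hasDerivAt_rpow_const (p := q) (Or.inl hx.ne')).mul
    (hF.comp x (hasDerivAt_div_mul_sqrt c d hx))).congr_deriv ?_
  rw [rpow_sub_one hx.ne', Function.comp_apply]
  field_simp
  ring

theorem sq_div_mul_sqrt (c d : ℝ) {x : ℝ} (hx : 0 ≤ x) :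
    (c / (d * √x)) ^ 2 = c ^ 2 / (d ^ 2 * x) := by
  rw [div_pow, mul_pow, sq_sqrt hx]

theorem abs_div_mul_sqrt_lt_one {c d x : ℝ} (hd : 0 < d) (h : c ^ 2 / d ^ 2 < x) :
    |c| / (d * √x) < 1 := by
  have hx : 0 < x := lt_of_le_of_lt (by positivity) h
  rw [div_lt_one (by positivity), ← sqrt_sq_eq_abs, ← sqrt_sq hd.le, ← sqrt_mul (sq_nonneg d)]
  exact sqrt_lt_sqrt (sq_nonneg c) ((div_lt_iff₀' (by positivity)).mp h)

theorem groundStateMass_eq (N : ℕ) (μ α : ℝ) :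
    groundStateMass N μ α = fun ω => (N : ℝ) * ((μ + 1) ^ (1 / μ) / μ) *
      (ω ^ (1 / μ - 1 / 2) * ∫ t in (|α| / ((N : ℝ) * √ω))..1, (1 - t ^ 2) ^ (1 / μ - 1)) := by
  ext ω
  rw [groundStateMass, mul_assoc]

/-- Vakhitov–Kolokolov slope condition: for `ω > α²/N²` the derivative of the squared
mass of the ground state equals
`C [(1/μ - 1/2) ∫_{|α|/(N√ω)}^1 (1-t²)^{1/μ-1} dt + (|α|/(2N√ω))(1-α²/(N²ω))^{1/μ-1}]`
with `C = N ((μ+1)^{1/μ}/μ) ω^{1/μ-3/2}`, and this derivative is strictly positive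
whenever `0 < μ ≤ 2`. -/
theorem ground_state_mass_slope (N : ℕ) (hN : 2 ≤ N) (μ α : ℝ)
    (hμ : 0 < μ) (hα : α < 0) (ω : ℝ) (hω : α ^ 2 / (N : ℝ) ^ 2 < ω) :
    let C : ℝ := (N : ℝ) * ((μ + 1) ^ (1 / μ) / μ) * ω ^ (1 / μ - 3 / 2)
    let D : ℝ := C * ((1 / μ - 1 / 2) *
        (∫ t in (|α| / ((N : ℝ) * Real.sqrt ω))..1, (1 - t ^ 2) ^ (1 / μ - 1))
      + (|α| / (2 * (N : ℝ) * Real.sqrt ω)) *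
          (1 - α ^ 2 / ((N : ℝ) ^ 2 * ω)) ^ (1 / μ - 1))
    HasDerivAt (groundStateMass N μ α) D ω ∧ (μ ≤ 2 → 0 < D) := by
  intro C D
  have hN0 : (0 : ℝ) < N := by exact_mod_cast (by omega : 0 < N)
  have hω0 : 0 < ω := lt_of_le_of_lt (by positivity) hω
  have hα0 : 0 < |α| := abs_pos.mpr hα.ne
  have ha0 : 0 < |α| / ((N : ℝ) * √ω) := by positivity
  have ha1 := abs_div_mul_sqrt_lt_one hN0 hω
  have hbase : 0 < 1 - α ^ 2 / ((N : ℝ) ^ 2 * ω) := by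
    rw [← sq_abs α, ← sq_div_mul_sqrt _ _ hω0.le]
    nlinarith
  have hF := hasDerivAt_integral_one_sub_sq_rpow (p := 1 / μ - 1)
    (by linarith [one_div_pos.mpr hμ]) (by linarith) ha1
  refine ⟨?_, fun hμ2 => ?_⟩
  · rw [groundStateMass_eq]
    refine ((hasDerivAt_rpow_mul_comp_div_mul_sqrt hω0 hF).const_mul _).congr_deriv ?_
    simp only [D, C]
    rw [sq_div_mul_sqrt _ _ hω0.le, sq_abs]
    ring_nf
  · have hq : 0 ≤ 1 / μ - 1 / 2 := sub_nonneg.mpr (one_div_le_one_div_of_le hμ hμ2)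
    have hI := integral_one_sub_sq_rpow_nonneg (p := 1 / μ - 1) (by linarith) ha1.le
    have hboundary := rpow_pos_of_pos hbase (1 / μ - 1)
    exact mul_pos (by positivity) (add_pos_of_nonneg_of_pos (mul_nonneg hq hI) (by positivity))

end
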